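/- arXiv:2307.09033 — 8 statements merged into one kernel-verified Lean document; each statement's English description precedes it below -/
import Mathlib

section
/- For every natural number n ≥ 1 there exists a family γ_1, …, γ_n of Hermitian complex matrices of size 2^⌊n/2⌋ × 2^⌊n/2⌋ such that γ_j γ_k + γ_k γ_j = 2 δ_{j,k} I for all j, k ∈ {1, …, n}, where δ_{j,k} is the Kronecker symbol and I is the identity matrix of size 2^⌊n/2⌋. -/
open Matrix Kronecker

noncomputable def PX : Matrix (Fin 2) (Fin 2) ℂ := !![0, 1; 1, 0]
noncomputable def PY : Matrix (Fin 2) (Fin 2) ℂ := !![0, -Complex.I; Complex.I, 0]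
noncomputable def PZ : Matrix (Fin 2) (Fin 2) ℂ := !![1, 0; 0, -1]

lemma PX_sq : PX * PX = 1 := by
  ext i j; fin_cases i <;> fin_cases j <;> simp [PX, Matrix.mul_apply, Fin.sum_univ_two]
lemma PY_sq : PY * PY = 1 := by
  ext i j; fin_cases i <;> fin_cases j <;>
    simp [PY, Matrix.mul_apply, Fin.sum_univ_two, Complex.ext_iff]
lemma PZ_sq : PZ * PZ = 1 := by
  ext i j; fin_cases i <;> fin_cases j <;> simp [PZ, Matrix.mul_apply, Fin.sum_univ_two]
lemma PXY : PX * PY + PY * PX = 0 := by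
  ext i j; fin_cases i <;> fin_cases j <;> simp [PX, PY, Matrix.mul_apply, Fin.sum_univ_two]
lemma PXZ : PX * PZ + PZ * PX = 0 := by
  ext i j; fin_cases i <;> fin_cases j <;> simp [PX, PZ, Matrix.mul_apply, Fin.sum_univ_two]
lemma PYZ : PY * PZ + PZ * PY = 0 := by
  ext i j; fin_cases i <;> fin_cases j <;> simp [PY, PZ, Matrix.mul_apply, Fin.sum_univ_two]
lemma PX_herm : PX.IsHermitian := by
  ext i j; fin_cases i <;> fin_cases j <;> simp [PX, Matrix.conjTranspose_apply]
lemma PY_herm : PY.IsHermitian := by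
  ext i j; fin_cases i <;> fin_cases j <;> simp [PY, Matrix.conjTranspose_apply]
lemma PZ_herm : PZ.IsHermitian := by
  ext i j; fin_cases i <;> fin_cases j <;> simp [PZ, Matrix.conjTranspose_apply]

lemma kron_herm {m : Type*} [Fintype m] (A : Matrix (Fin 2) (Fin 2) ℂ) (B : Matrix m m ℂ)
    (hA : A.IsHermitian) (hB : B.IsHermitian) : (A ⊗ₖ B).IsHermitian := by
  ext ⟨i, j⟩ ⟨k, l⟩
  simp only [Matrix.conjTranspose_apply, kroneckerMap_apply, star_mul']
  rw [← hA.apply, ← hB.apply]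
  simp [Matrix.conjTranspose_apply, mul_comm]

/-- The Clifford family existence predicate, over an arbitrary index type. -/
def CliffFamI (n : ℕ) (I : Type) [Fintype I] [DecidableEq I] : Prop :=
  ∃ γ : Fin n → Matrix I I ℂ,
    (∀ j, (γ j).IsHermitian) ∧
    (∀ j k, γ j * γ k + γ k * γ j = (if j = k then (2 : ℂ) else 0) • 1)

lemma CliffFamI.reindex {n : ℕ} {I J : Type} [Fintype I] [DecidableEq I] [Fintype J]
    [DecidableEq J] (h : CliffFamI n I) (e : I ≃ J) : CliffFamI n J := by
  obtain ⟨γ, hH, hR⟩ := h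
  refine ⟨fun j => (γ j).submatrix e.symm e.symm, fun j => ?_, fun j k => ?_⟩
  · ext i l
    simp only [Matrix.conjTranspose_apply, Matrix.submatrix_apply]
    rw [← (hH j).apply]; simp [Matrix.conjTranspose_apply]
  · rw [Matrix.submatrix_mul_equiv, Matrix.submatrix_mul_equiv]
    calc (γ j * γ k).submatrix ⇑e.symm ⇑e.symm + (γ k * γ j).submatrix ⇑e.symm ⇑e.symm
        = ((γ j * γ k) + (γ k * γ j)).submatrix ⇑e.symm ⇑e.symm := rfl
      _ = ((if j = k then (2 : ℂ) else 0) • (1 : Matrix I I ℂ)).submatrix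
            ⇑e.symm ⇑e.symm := by rw [hR]
      _ = (if j = k then (2 : ℂ) else 0) •
            ((1 : Matrix I I ℂ)).submatrix ⇑e.symm ⇑e.symm := rfl
      _ = _ := by rw [Matrix.submatrix_one_equiv]

lemma CliffFamI.one : CliffFamI 1 (Fin 1) := by
  refine ⟨fun _ => 1, fun j => Matrix.isHermitian_one, fun j k => ?_⟩
  have : j = k := Subsingleton.elim j k
  subst this
  simp [two_smul]

lemma CliffFamI.two : CliffFamI 2 (Fin 2) := by
  refine ⟨![PX, PY], fun j => ?_, fun j k => ?_⟩
  · fin_cases j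
    exacts [PX_herm, PY_herm]
  · have PYX : PY * PX + PX * PY = 0 := by rw [add_comm]; exact PXY
    fin_cases j <;> fin_cases k <;>
      simp [PX_sq, PY_sq, PXY, PYX, two_smul]

lemma kron_same {I : Type} [Fintype I] [DecidableEq I] (P : Matrix (Fin 2) (Fin 2) ℂ)
    (A B : Matrix I I ℂ) (hP : P * P = 1) :
    (P ⊗ₖ A) * (P ⊗ₖ B) + (P ⊗ₖ B) * (P ⊗ₖ A) = 1 ⊗ₖ (A * B + B * A) := by
  rw [← Matrix.mul_kronecker_mul, ← Matrix.mul_kronecker_mul, hP, ← Matrix.kronecker_add]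

lemma kron_diff {I : Type} [Fintype I] [DecidableEq I] (P Q : Matrix (Fin 2) (Fin 2) ℂ)
    (A B : Matrix I I ℂ) (hPQ : P * Q + Q * P = 0) (hAB : A * B = B * A) :
    (P ⊗ₖ A) * (Q ⊗ₖ B) + (Q ⊗ₖ B) * (P ⊗ₖ A) = 0 := by
  rw [← Matrix.mul_kronecker_mul, ← Matrix.mul_kronecker_mul, ← hAB,
    ← Matrix.add_kronecker, hPQ, Matrix.zero_kronecker]

lemma CliffFamI.step {n : ℕ} {I : Type} [Fintype I] [DecidableEq I] (h : CliffFamI n I) :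
    CliffFamI (n + 2) (Fin 2 × I) := by
  obtain ⟨γ, hH, hR⟩ := h
  refine ⟨fun j => if hj : (j : ℕ) < n then PX ⊗ₖ γ ⟨j, hj⟩
    else if (j : ℕ) = n then PY ⊗ₖ 1 else PZ ⊗ₖ 1, fun j => ?_, fun j k => ?_⟩
  · by_cases hj : (j : ℕ) < n
    · simpa [hj] using kron_herm PX _ PX_herm (hH ⟨j, hj⟩)
    · by_cases hj' : (j : ℕ) = n
      · simpa [hj, hj'] using kron_herm PY _ PY_herm Matrix.isHermitian_one
      · simpa [hj, hj'] using kron_herm PZ _ PZ_herm Matrix.isHermitian_one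
  · have hjk2 : (j : ℕ) < n + 2 := j.isLt
    have hkk2 : (k : ℕ) < n + 2 := k.isLt
    by_cases hj : (j : ℕ) < n <;> by_cases hk : (k : ℕ) < n
    · -- both small
      simp only [dif_pos hj, dif_pos hk]
      rw [kron_same PX _ _ PX_sq, hR]
      have : ((⟨(j : ℕ), hj⟩ : Fin n) = ⟨(k : ℕ), hk⟩) ↔ j = k := by
        simp [Fin.ext_iff]
      rw [show (if (⟨(j : ℕ), hj⟩ : Fin n) = ⟨(k : ℕ), hk⟩ then (2:ℂ) else 0)
          = (if j = k then (2:ℂ) else 0) by simp [this]]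
      rw [Matrix.kronecker_smul, Matrix.one_kronecker_one]
    · -- j small, k big
      have hne : j ≠ k := by
        intro hEq; apply hk; rw [← hEq]; exact hj
      rw [if_neg hne, zero_smul]
      simp only [dif_pos hj, dif_neg hk]
      by_cases hk' : (k : ℕ) = n
      · rw [if_pos hk']
        exact kron_diff PX PY _ _ PXY (by rw [mul_one, one_mul])
      · rw [if_neg hk']
        exact kron_diff PX PZ _ _ PXZ (by rw [mul_one, one_mul])
    · -- j big, k small
      have hne : j ≠ k := by
        intro hEq; apply hj; rw [hEq]; exact hk
      rw [if_neg hne, zero_smul]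
      simp only [dif_neg hj, dif_pos hk]
      by_cases hj' : (j : ℕ) = n
      · rw [if_pos hj']
        exact kron_diff PY PX _ _ (by rw [add_comm]; exact PXY) (by rw [mul_one, one_mul])
      · rw [if_neg hj']
        exact kron_diff PZ PX _ _ (by rw [add_comm]; exact PXZ) (by rw [mul_one, one_mul])
    · -- both big
      simp only [dif_neg hj, dif_neg hk]
      by_cases hj' : (j : ℕ) = n <;> by_cases hk' : (k : ℕ) = n
      · have hEq : j = k := Fin.ext (by rw [hj', hk'])
        rw [if_pos hEq, if_pos hj', if_pos hk', kron_same PY _ _ PY_sq, mul_one,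
          ← two_smul ℂ (1 : Matrix I I ℂ), Matrix.kronecker_smul, Matrix.one_kronecker_one]
      · have hne : j ≠ k := by
          intro hEq; apply hk'; rw [← hEq]; exact hj'
        rw [if_neg hne, zero_smul, if_pos hj', if_neg hk']
        exact kron_diff PY PZ _ _ PYZ rfl
      · have hne : j ≠ k := by
          intro hEq; apply hj'; rw [hEq]; exact hk'
        rw [if_neg hne, zero_smul, if_neg hj', if_pos hk']
        exact kron_diff PZ PY _ _ (by rw [add_comm]; exact PYZ) rfl
      · have hEq : j = k := Fin.ext (by omega)
        rw [if_pos hEq, if_neg hj', if_neg hk', kron_same PZ _ _ PZ_sq, mul_one,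
          ← two_smul ℂ (1 : Matrix I I ℂ), Matrix.kronecker_smul, Matrix.one_kronecker_one]

lemma cliff_main : ∀ n : ℕ, 1 ≤ n → CliffFamI n (Fin (2 ^ (n / 2))) := by
  intro n
  induction n using Nat.strong_induction_on with
  | _ n ih =>
    intro hn
    match n, hn with
    | 1, _ => exact CliffFamI.one
    | 2, _ => exact CliffFamI.two
    | (m + 3), _ =>
      have h := (ih (m + 1) (by omega) (by omega)).step
      have hpow : 2 * 2 ^ ((m + 1) / 2) = 2 ^ ((m + 3) / 2) := by
        have : (m + 3) / 2 = (m + 1) / 2 + 1 := by omega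
        rw [this, pow_succ, mul_comm]
      exact h.reindex ((finProdFinEquiv).trans (finCongr hpow))

/-- For every natural number `n ≥ 1` there exists a family `γ_1, …, γ_n` of Hermitian
complex matrices of size `2^⌊n/2⌋ × 2^⌊n/2⌋` satisfying the anticommutation relations
`γ_j γ_k + γ_k γ_j = 2 δ_{j,k} I`. -/
theorem exists_clifford_family (n : ℕ) (hn : 1 ≤ n) :
    ∃ γ : Fin n → Matrix (Fin (2 ^ (n / 2))) (Fin (2 ^ (n / 2))) ℂ,
      (∀ j, (γ j).IsHermitian) ∧
      (∀ j k, γ j * γ k + γ k * γ j = (if j = k then (2 : ℂ) else 0) • 1) := by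
  exact cliff_main n hn
end

section
/- For every real number m ≥ 0 and every integer p ≥ 1, the equation m·sin(2k) + k·cos(2k) = 0 has exactly one solution k in the interval [(2p−1)π/4, pπ/2]. -/
open Real Set

/-!
Put `c = pπ/2`. Since `2k = pπ - 2(c - k)`, the left-hand side equals `(-1)^p` times
`k cos (2(c - k)) - m sin (2(c - k))`. On `[c - π/4, c]` the angle `2(c - k)` runs down from
`π/2` to `0`, so the cosine increases and the sine decreases in `k`: this function is strictly
increasing there, from `-m ≤ 0` to `c > 0`, hence has exactly one zero.
-/

theorem existsUnique_eq_zero_of_strictMonoOn {f : ℝ → ℝ} {a b : ℝ} (hab : a ≤ b)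
    (hcont : ContinuousOn f (Icc a b)) (hmono : StrictMonoOn f (Icc a b))
    (ha : f a ≤ 0) (hb : 0 ≤ f b) :
    ∃! x, x ∈ Icc a b ∧ f x = 0 := by
  obtain ⟨x, hx, hfx⟩ := intermediate_value_Icc hab hcont ⟨ha, hb⟩
  exact ⟨x, ⟨hx, hfx⟩, fun y ⟨hy, hfy⟩ => hmono.injOn hy hx (hfy.trans hfx.symm)⟩

noncomputable def signedTransverse (m c k : ℝ) : ℝ :=
  k * cos (2 * (c - k)) - m * sin (2 * (c - k))

theorem neg_one_pow_mul_eq_signedTransverse (m k : ℝ) (p : ℕ) :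
    (-1) ^ p * (m * sin (2 * k) + k * cos (2 * k)) = signedTransverse m (p * π / 2) k := by
  have h2k : 2 * k = p * π - 2 * (p * π / 2 - k) := by ring
  have hsq : ((-1 : ℝ) ^ p) ^ 2 = 1 := by rw [← pow_mul, mul_comm, pow_mul]; norm_num
  rw [signedTransverse, h2k, sin_nat_mul_pi_sub, cos_nat_mul_pi_sub]
  linear_combination (k * cos (2 * (p * π / 2 - k)) - m * sin (2 * (p * π / 2 - k))) * hsq

theorem continuous_signedTransverse (m c : ℝ) : Continuous (signedTransverse m c) := by
  unfold signedTransverse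
  fun_prop

theorem signedTransverse_sub_pi_div_four (m c : ℝ) : signedTransverse m c (c - π / 4) = -m := by
  rw [signedTransverse, show 2 * (c - (c - π / 4)) = π / 2 by ring, cos_pi_div_two,
    sin_pi_div_two]
  ring

theorem signedTransverse_self (m c : ℝ) : signedTransverse m c c = c := by
  simp [signedTransverse]

theorem strictMonoOn_signedTransverse {m c : ℝ} (hm : 0 ≤ m) (hc : π / 4 ≤ c) :
    StrictMonoOn (signedTransverse m c) (Icc (c - π / 4) c) := by
  intro k ⟨hk₁, hk₂⟩ l ⟨hl₁, hl₂⟩ hkl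
  have hcos : cos (2 * (c - k)) < cos (2 * (c - l)) :=
    cos_lt_cos_of_nonneg_of_le_pi_div_two (by linarith) (by linarith) (by linarith)
  have hcos_nonneg : 0 ≤ cos (2 * (c - k)) :=
    cos_nonneg_of_mem_Icc ⟨by linarith [pi_pos], by linarith⟩
  have hsin : sin (2 * (c - l)) ≤ sin (2 * (c - k)) :=
    sin_le_sin_of_le_of_le_pi_div_two (by linarith [pi_pos]) (by linarith) (by linarith)
  have hl : 0 < l := by linarith [pi_pos]
  unfold signedTransverse
  nlinarith [mul_le_mul_of_nonneg_left hsin hm]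

/-- For every `m ≥ 0` and every integer `p ≥ 1`, the equation
`m·sin(2k) + k·cos(2k) = 0` has exactly one solution `k` in the interval
`[(2p−1)π/4, pπ/2]`. -/
theorem unique_transverse_root (m : ℝ) (hm : 0 ≤ m) (p : ℕ) (hp : 1 ≤ p) :
    ∃! k : ℝ, k ∈ Set.Icc ((2 * (p : ℝ) - 1) * π / 4) ((p : ℝ) * π / 2) ∧
      m * Real.sin (2 * k) + k * Real.cos (2 * k) = 0 := by
  set c : ℝ := p * π / 2 with hc_def
  have hc : π / 4 ≤ c := by
    have : (1 : ℝ) ≤ p := by exact_mod_cast hp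
    rw [hc_def]; nlinarith [pi_pos]
  have hleft : (2 * (p : ℝ) - 1) * π / 4 = c - π / 4 := by ring
  have hroot : ∀ k, m * sin (2 * k) + k * cos (2 * k) = 0 ↔ signedTransverse m c k = 0 := by
    intro k
    rw [← neg_one_pow_mul_eq_signedTransverse, mul_eq_zero,
      or_iff_right (pow_ne_zero _ (by norm_num))]
  simp only [hleft, hroot]
  refine existsUnique_eq_zero_of_strictMonoOn (by linarith [pi_pos])
    (continuous_signedTransverse m c).continuousOn (strictMonoOn_signedTransverse hm hc) ?_ ?_
  · rw [signedTransverse_sub_pi_div_four]; linarith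
  · rw [signedTransverse_self]; linarith [pi_pos]
end

section
/- For m ≥ 0 let k_1(m) denote the unique solution in [π/4, π/2] of m·sin(2k) + k·cos(2k) = 0. Then there exist constants C > 0 and m_0 > 0 such that for all m ∈ [0, m_0] one has |k_1(m) − (π/4 + (2/π)m − (16/π³)m²)| ≤ C·m³. -/
open Real

/-! With `k = π/4 + ε` the equation becomes `m cos 2ε = (π/4 + ε) sin 2ε`. Jordan's inequality
gives `ε ≤ m`, and then replacing `sin 2ε, cos 2ε` by `2ε, 1` costs `O(m³)`, leaving
`2πε - 4m + 8ε² = O(m³)`. Solving this to first order gives `ε = 2m/π + O(m²)`, and feeding that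
into `ε²` gives the second-order term. -/

namespace Real

lemma abs_cos_sub_one_le (x : ℝ) : |cos x - 1| ≤ x ^ 2 / 2 := by
  rw [abs_le]
  constructor
  · linarith [one_sub_sq_div_two_le_cos (x := x)]
  · linarith [cos_le_one x, sq_nonneg x]

lemma mul_cos_sub_eq_mul_sin_sub {m k : ℝ} (h : m * sin (2 * k) + k * cos (2 * k) = 0) :
    m * cos (2 * (k - π / 4)) = k * sin (2 * (k - π / 4)) := by
  rw [show 2 * (k - π / 4) = 2 * k - π / 2 by ring, cos_sub_pi_div_two, sin_sub_pi_div_two]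
  linarith

end Real

namespace K1Shift

variable {m ε : ℝ}

lemma two_pi_mul_sub_four_mul_eq (h : m * cos (2 * ε) = (π / 4 + ε) * sin (2 * ε)) :
    2 * π * ε - 4 * m =
      4 * m * (cos (2 * ε) - 1) - 8 * ε ^ 2 - (π + 4 * ε) * (sin (2 * ε) - 2 * ε) := by
  linear_combination (-4) * h

variable (hm : 0 ≤ m) (hε₀ : 0 ≤ ε) (hε : ε ≤ π / 4)
  (h : m * cos (2 * ε) = (π / 4 + ε) * sin (2 * ε))
include hm hε₀ hε h

lemma le_of_mul_cos_eq : ε ≤ m := by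
  have hjordan : 2 / π * (2 * ε) ≤ sin (2 * ε) := mul_le_sin (by linarith) (by linarith)
  calc ε = 2 / π * (2 * ε) * (π / 4) := by field_simp; ring
    _ ≤ sin (2 * ε) * (π / 4 + ε) := by
      gcongr
      · exact le_trans (by positivity) hjordan
      · linarith
    _ = m * cos (2 * ε) := by rw [h]; ring
    _ ≤ m := mul_le_of_le_one_right hm (cos_le_one _)

lemma abs_remainders_le :
    |4 * m * (cos (2 * ε) - 1)| ≤ 8 * m ^ 3 ∧
      |(π + 4 * ε) * (sin (2 * ε) - 2 * ε)| ≤ 3 * π * m ^ 3 := by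
  have hεm := le_of_mul_cos_eq hm hε₀ hε h
  have hε3 : ε ^ 3 ≤ m ^ 3 := pow_le_pow_left₀ hε₀ hεm 3
  have hε2 : ε ^ 2 ≤ m ^ 2 := pow_le_pow_left₀ hε₀ hεm 2
  have hcos := abs_cos_sub_one_le (2 * ε)
  have hsin := abs_sub_sin_le (2 * ε)
  rw [abs_sub_comm, abs_of_nonneg (by positivity : (0 : ℝ) ≤ 2 * ε)] at hsin
  rw [abs_mul (4 * m), abs_mul (π + 4 * ε), abs_of_nonneg (by positivity : (0 : ℝ) ≤ 4 * m),
    abs_of_nonneg (by linarith [pi_pos] : (0 : ℝ) ≤ π + 4 * ε)]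
  constructor
  · calc 4 * m * |cos (2 * ε) - 1| ≤ 4 * m * (2 * m ^ 2) := by
          gcongr; linarith
      _ = 8 * m ^ 3 := by ring
  · calc (π + 4 * ε) * |sin (2 * ε) - 2 * ε| ≤ (2 * π) * (4 / 3 * m ^ 3) := by
          gcongr <;> linarith
      _ ≤ 3 * π * m ^ 3 := by nlinarith [pi_pos, pow_nonneg hm 3]

lemma abs_sub_linear_le (hm₁ : m ≤ 1 / 10) : |ε - 2 / π * m| ≤ 2 * m ^ 2 := by
  obtain ⟨hcos, hsin⟩ := abs_remainders_le hm hε₀ hε h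
  have hεm := le_of_mul_cos_eq hm hε₀ hε h
  have hε2 : ε ^ 2 ≤ m ^ 2 := pow_le_pow_left₀ hε₀ hεm 2
  have hm3 : m ^ 3 ≤ m ^ 2 / 10 := by nlinarith [sq_nonneg m]
  have hπm : π * m ^ 3 ≤ 4 * m ^ 3 := by nlinarith [pi_lt_four, pow_nonneg hm 3]
  have hbound : |2 * π * (ε - 2 / π * m)| ≤ 10 * m ^ 2 := by
    rw [show 2 * π * (ε - 2 / π * m) = 2 * π * ε - 4 * m by field_simp; ring,
      two_pi_mul_sub_four_mul_eq h]
    rw [abs_le] at hcos hsin ⊢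
    constructor <;> linarith [sq_nonneg ε]
  rw [abs_mul, abs_of_pos (by positivity)] at hbound
  nlinarith [pi_gt_three, abs_nonneg (ε - 2 / π * m)]

lemma abs_sub_quadratic_le (hm₁ : m ≤ 1 / 10) :
    |ε - (2 / π * m - 16 / π ^ 3 * m ^ 2)| ≤ 8 * m ^ 3 := by
  obtain ⟨hcos, hsin⟩ := abs_remainders_le hm hε₀ hε h
  have hlin := abs_sub_linear_le hm hε₀ hε h hm₁
  have hπ : 3 < π := pi_gt_three
  have hsq : |ε ^ 2 - (2 / π * m) ^ 2| ≤ 4 * m ^ 3 := by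
    have hsum : |ε + 2 / π * m| ≤ 2 * m := by
      have hcoeff : 2 / π * m ≤ m := by
        rw [div_mul_eq_mul_div, div_le_iff₀ (by positivity)]; nlinarith
      rw [abs_of_nonneg (by positivity)]
      linarith [le_of_mul_cos_eq hm hε₀ hε h]
    calc |ε ^ 2 - (2 / π * m) ^ 2| = |ε - 2 / π * m| * |ε + 2 / π * m| := by
          rw [← abs_mul]; ring_nf
      _ ≤ 2 * m ^ 2 * (2 * m) := by gcongr
      _ = 4 * m ^ 3 := by ring
  have hidentity : 2 * π * (ε - (2 / π * m - 16 / π ^ 3 * m ^ 2)) =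
      4 * m * (cos (2 * ε) - 1) - 8 * (ε ^ 2 - (2 / π * m) ^ 2)
        - (π + 4 * ε) * (sin (2 * ε) - 2 * ε) := by
    have := two_pi_mul_sub_four_mul_eq h
    field_simp
    linear_combination π ^ 2 * this
  have hbound : |2 * π * (ε - (2 / π * m - 16 / π ^ 3 * m ^ 2))| ≤ 2 * π * (8 * m ^ 3) := by
    have hπm : 40 * m ^ 3 ≤ 13 * π * m ^ 3 := by nlinarith [pi_gt_d2, pow_nonneg hm 3]
    rw [hidentity]
    rw [abs_le] at hcos hsin hsq ⊢
    constructor <;> linarith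
  rw [abs_mul, abs_of_pos (by positivity)] at hbound
  exact le_of_mul_le_mul_left hbound (by positivity)

end K1Shift

/-- Asymptotic expansion `k_1(m) = π/4 + (2/π)m − (16/π³)m² + O(m³)` as `m → 0`,
where `k_1(m)` is the unique solution in `[π/4, π/2]` of `m·sin(2k) + k·cos(2k) = 0`. -/
theorem k1_asymptotic_expansion (k1 : ℝ → ℝ)
    (hk1 : ∀ m : ℝ, 0 ≤ m → k1 m ∈ Set.Icc (π / 4) (π / 2) ∧
      m * Real.sin (2 * k1 m) + k1 m * Real.cos (2 * k1 m) = 0) :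
    ∃ C > 0, ∃ m0 > 0, ∀ m ∈ Set.Icc (0 : ℝ) m0,
      |k1 m - (π / 4 + (2 / π) * m - (16 / π ^ 3) * m ^ 2)| ≤ C * m ^ 3 := by
  refine ⟨8, by norm_num, 1 / 10, by norm_num, fun m ⟨hm, hm₁⟩ => ?_⟩
  obtain ⟨⟨hlo, hhi⟩, heq⟩ := hk1 m hm
  have hshift := K1Shift.abs_sub_quadratic_le hm (sub_nonneg.2 hlo) (by linarith)
    (by simpa using mul_cos_sub_eq_mul_sin_sub heq) hm₁
  convert hshift using 2
  ring
end

section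
/- For m ≥ 0 let k_1(m) denote the unique solution in [π/4, π/2] of m·sin(2k) + k·cos(2k) = 0, and set E_1(m)² := m² + k_1(m)². Then there exist constants C > 0 and m_0 > 0 such that for all m ∈ [0, m_0] one has |E_1(m)² − (π²/16 + m + (1 − 4/π²)·m²)| ≤ C·m³. -/
/-! Write `k₁(m) = π/4 + t/2`. The equation becomes `m cos t = k₁ sin t`, so Jordan's inequality
`sin t ≥ 2t/π` gives `t ≤ 2m`. Multiplying the error by `π² cos² t` and eliminating `m` through
`m cos t = k₁ sin t` leaves a trigonometric polynomial in `t` whose Taylor coefficients cancel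
up to order `t²`; hence it is `O(t³) = O(m³)`, and `π² cos² t` stays bounded away from `0`. -/

open Real

namespace Real

lemma abs_cos_sq_sub_one_le (x : ℝ) : |cos x ^ 2 - 1| ≤ x ^ 2 := by
  rw [cos_sq', sub_sub_cancel_left, abs_neg, abs_of_nonneg (sq_nonneg _)]
  exact sin_sq_le_sq

lemma abs_sin_mul_cos_sub_self_le (x : ℝ) : |sin x * cos x - x| ≤ 2 * |x| ^ 3 / 3 := by
  have h := abs_sub_sin_le (2 * x)
  rw [sin_two_mul, abs_mul, abs_two] at h
  rw [abs_sub_comm, show x - sin x * cos x = (2 * x - 2 * sin x * cos x) / 2 by ring, abs_div,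
    abs_two]
  linarith

lemma abs_sin_sq_sub_sq_le (x : ℝ) : |sin x ^ 2 - x ^ 2| ≤ x ^ 4 / 3 := by
  have hsum : |sin x + x| ≤ 2 * |x| :=
    (abs_add_le _ _).trans (by linarith [abs_sin_le_abs (x := x)])
  calc |sin x ^ 2 - x ^ 2| = |x - sin x| * |sin x + x| := by
        rw [← abs_mul, abs_sub_comm]; ring_nf
    _ ≤ |x| ^ 3 / 6 * (2 * |x|) := by gcongr; exact abs_sub_sin_le x
    _ = x ^ 4 / 3 := by rw [← Even.pow_abs ⟨2, rfl⟩]; ring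

end Real

lemma le_two_mul_of_mul_cos_eq_mul_sin {m k t : ℝ} (hm : 0 ≤ m) (hk : π / 4 ≤ k) (ht₀ : 0 ≤ t)
    (ht : t ≤ π / 2) (h : m * cos t = k * sin t) : t ≤ 2 * m :=
  calc t = 2 * (π / 4 * (2 / π * t)) := by field_simp; ring
    _ ≤ 2 * (k * sin t) := by
      gcongr
      · linarith [pi_pos]
      · exact mul_le_sin ht₀ ht
    _ = 2 * (m * cos t) := by rw [h]
    _ ≤ 2 * m := by gcongr; exact mul_le_of_le_one_right hm (cos_le_one t)

lemma pi_sq_mul_expansion_error_mul_cos_sq {m k s c : ℝ} (h : m * c = k * s) :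
    π ^ 2 * (m ^ 2 + k ^ 2 - (π ^ 2 / 16 + m + (1 - 4 / π ^ 2) * m ^ 2)) * c ^ 2 =
      π ^ 2 * (k ^ 2 - π ^ 2 / 16) * c ^ 2 - π ^ 2 * k * s * c + 4 * k ^ 2 * s ^ 2 := by
  have hπ : π ^ 2 * (1 - 4 / π ^ 2) = π ^ 2 - 4 := by field_simp
  linear_combination (4 * (m * c + k * s) - π ^ 2 * c) * h - m ^ 2 * c ^ 2 * hπ

lemma abs_trig_remainder_le_cube {t : ℝ} (ht₀ : 0 ≤ t) (ht : t ≤ 1) :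
    |π ^ 2 * ((π / 4 + t / 2) ^ 2 - π ^ 2 / 16) * cos t ^ 2
      - π ^ 2 * (π / 4 + t / 2) * sin t * cos t + 4 * (π / 4 + t / 2) ^ 2 * sin t ^ 2|
      ≤ 44 * t ^ 3 := by
  have hπ₀ := pi_pos
  have hπ := pi_le_four
  set s := sin t
  set c := cos t
  have hA : π ^ 2 * (π * t / 4 + t ^ 2 / 4) ≤ 20 * t :=
    calc _ ≤ 4 ^ 2 * (4 * t / 4 + t / 4) := by gcongr; nlinarith
      _ = 20 * t := by ring
  have hB : π ^ 2 * (π / 4 + t / 2) ≤ 24 := by nlinarith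
  have hD : 4 * (π / 4 + t / 2) ^ 2 ≤ 9 := by nlinarith
  have hc : |π ^ 2 * (π * t / 4 + t ^ 2 / 4) * (c ^ 2 - 1)| ≤ 20 * t ^ 3 := by
    rw [abs_mul, abs_of_nonneg (by positivity)]
    calc _ ≤ 20 * t * t ^ 2 := by gcongr; exact abs_cos_sq_sub_one_le t
      _ = 20 * t ^ 3 := by ring
  have hsc : |π ^ 2 * (π / 4 + t / 2) * (s * c - t)| ≤ 16 * t ^ 3 := by
    rw [abs_mul, abs_of_nonneg (by positivity)]
    calc _ ≤ 24 * (2 * |t| ^ 3 / 3) := by gcongr; exact abs_sin_mul_cos_sub_self_le t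
      _ = 16 * t ^ 3 := by rw [abs_of_nonneg ht₀]; ring
  have hs : |4 * (π / 4 + t / 2) ^ 2 * (s ^ 2 - t ^ 2)| ≤ 3 * t ^ 3 := by
    rw [abs_mul, abs_of_nonneg (by positivity)]
    calc _ ≤ 9 * (t ^ 4 / 3) := by gcongr; exact abs_sin_sq_sub_sq_le t
      _ ≤ 3 * t ^ 3 := by nlinarith [pow_nonneg ht₀ 3]
  -- the orders `t` and `t²` cancel exactly
  have hsplit : π ^ 2 * ((π / 4 + t / 2) ^ 2 - π ^ 2 / 16) * c ^ 2
      - π ^ 2 * (π / 4 + t / 2) * s * c + 4 * (π / 4 + t / 2) ^ 2 * s ^ 2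
      = π * t ^ 3 + t ^ 4 + π ^ 2 * (π * t / 4 + t ^ 2 / 4) * (c ^ 2 - 1)
        - π ^ 2 * (π / 4 + t / 2) * (s * c - t) + 4 * (π / 4 + t / 2) ^ 2 * (s ^ 2 - t ^ 2) := by
    ring
  have ht3 : 0 ≤ t ^ 3 := pow_nonneg ht₀ 3
  have hπt : π * t ^ 3 ≤ 4 * t ^ 3 := by gcongr
  have ht4 : t ^ 4 ≤ t ^ 3 := pow_le_pow_of_le_one ht₀ ht (by norm_num)
  obtain ⟨hc₁, hc₂⟩ := abs_le.mp hc
  obtain ⟨hsc₁, hsc₂⟩ := abs_le.mp hsc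
  obtain ⟨hs₁, hs₂⟩ := abs_le.mp hs
  rw [hsplit, abs_le]
  constructor <;> linarith [mul_nonneg hπ₀.le ht3, pow_nonneg ht₀ 4]

lemma pi_sq_mul_abs_expansion_error_mul_cos_sq_le {m t : ℝ} (ht₀ : 0 ≤ t) (ht : t ≤ 1)
    (h : m * cos t = (π / 4 + t / 2) * sin t) :
    π ^ 2 * |m ^ 2 + (π / 4 + t / 2) ^ 2 - (π ^ 2 / 16 + m + (1 - 4 / π ^ 2) * m ^ 2)|
      * cos t ^ 2 ≤ 44 * t ^ 3 := by
  have hbound := abs_trig_remainder_le_cube ht₀ ht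
  rwa [← pi_sq_mul_expansion_error_mul_cos_sq h, abs_mul, abs_mul,
    abs_of_nonneg (sq_nonneg π), abs_of_nonneg (sq_nonneg (cos t))] at hbound

/-- Asymptotic expansion `E_1(m)² = π²/16 + m + (1 − 4/π²)m² + O(m³)` as `m → 0`,
where `E_1(m)² = m² + k_1(m)²` and `k_1(m)` is the unique solution in `[π/4, π/2]`
of `m·sin(2k) + k·cos(2k) = 0`. -/
theorem E1_sq_asymptotic_expansion (k1 : ℝ → ℝ)
    (hk1 : ∀ m : ℝ, 0 ≤ m → k1 m ∈ Set.Icc (π / 4) (π / 2) ∧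
      m * Real.sin (2 * k1 m) + k1 m * Real.cos (2 * k1 m) = 0) :
    ∃ C > 0, ∃ m0 > 0, ∀ m ∈ Set.Icc (0 : ℝ) m0,
      |(m ^ 2 + (k1 m) ^ 2) - (π ^ 2 / 16 + m + (1 - 4 / π ^ 2) * m ^ 2)| ≤ C * m ^ 3 := by
  refine ⟨60, by norm_num, 1 / 4, by norm_num, ?_⟩
  rintro m ⟨hm₀, hm⟩
  obtain ⟨⟨hk₁, hk₂⟩, hroot⟩ := hk1 m hm₀
  obtain ⟨t, hkt⟩ : ∃ t, k1 m = π / 4 + t / 2 := ⟨2 * k1 m - π / 2, by ring⟩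
  rw [hkt] at hk₁ hk₂ hroot ⊢
  rw [show 2 * (π / 4 + t / 2) = t + π / 2 by ring, sin_add_pi_div_two,
    cos_add_pi_div_two] at hroot
  have hcross : m * cos t = (π / 4 + t / 2) * sin t := by linarith
  have htm : t ≤ 2 * m :=
    le_two_mul_of_mul_cos_eq_mul_sin hm₀ hk₁ (by linarith) (by linarith) hcross
  have hcos : 6 ≤ π ^ 2 * cos t ^ 2 :=
    calc (6 : ℝ) ≤ 3 ^ 2 * (7 / 8) ^ 2 := by norm_num
      _ ≤ π ^ 2 * cos t ^ 2 := by
        gcongr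
        · exact pi_gt_three.le
        · nlinarith [one_sub_sq_div_two_le_cos (x := t)]
  set err := m ^ 2 + (π / 4 + t / 2) ^ 2 - (π ^ 2 / 16 + m + (1 - 4 / π ^ 2) * m ^ 2)
  have hremainder : π ^ 2 * |err| * cos t ^ 2 ≤ 44 * t ^ 3 :=
    pi_sq_mul_abs_expansion_error_mul_cos_sq_le (by linarith) (by linarith) hcross
  have herr : 6 * |err| ≤ 44 * t ^ 3 := by nlinarith [abs_nonneg err]
  have ht3 : t ^ 3 ≤ 8 * m ^ 3 := (pow_le_pow_left₀ (by linarith) htm 3).trans_eq (by ring)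
  linarith [pow_nonneg hm₀ 3]
end

section
/- Let x ∈ ℝ^n with |x| = 1, let m ≥ 0, and let f : ℝ → ℂ^N be continuously differentiable on [−1, 1] and satisfy the boundary conditions −i α_{n+1} Γ(x) f(1) = f(1) and −i α_{n+1} Γ(x) f(−1) = −f(−1). Then ∫_{−1}^{1} |−i Γ(x) f'(t) + m α_{n+1} f(t)|² dt = ∫_{−1}^{1} |f'(t)|² dt + m² ∫_{−1}^{1} |f(t)|² dt + m (|f(1)|² + |f(−1)|²), where |·| is the Euclidean norm on ℂ^N. -/
open Matrix Set MeasureTheory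

/-!
Write `Γ = Γ(x)`, `A = α_{n+1}` and `B = -i A Γ`. The Clifford relations and `|x| = 1` give
`Γ² = A² = 1` and `Γ A = -A Γ`, so pointwise
`|-i Γ f' + m A f|² = |f'|² + m² |f|² + m (⟨f', B f⟩ + ⟨f, B f'⟩)`.
The last bracket is the derivative of `⟨f, B f⟩`, so it integrates to
`⟨f(1), B f(1)⟩ - ⟨f(-1), B f(-1)⟩`, and the boundary conditions say exactly that
`f(±1)` is a `±1`-eigenvector of `B`.
-/

lemma eq_of_add_self_eq_two_smul {M : Type*} [AddCommGroup M] [Module ℂ M] {a b : M}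
    (h : a + a = (2 : ℂ) • b) : a = b := by
  rw [← two_smul ℂ a] at h
  exact smul_right_injective M two_ne_zero h

section LinearCombination

variable {ι n : Type*} [Fintype ι] {β : ι → Matrix n n ℂ}

lemma isHermitian_sum_ofReal_smul (hβ : ∀ j, (β j).IsHermitian) (x : ι → ℝ) :
    (∑ j, (x j : ℂ) • β j).IsHermitian :=
  isSelfAdjoint_sum _ fun j _ => (hβ j).smul (by simp [IsSelfAdjoint])

lemma sum_smul_mul_eq_neg_mul_sum_smul [Fintype n] {A : Matrix n n ℂ}
    (hA : ∀ j, β j * A = -(A * β j)) (c : ι → ℂ) :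
    (∑ j, c j • β j) * A = -(A * ∑ j, c j • β j) := by
  simp only [Finset.sum_mul, Finset.mul_sum, ← Finset.sum_neg_distrib, smul_mul_assoc,
    mul_smul_comm, hA, smul_neg]

end LinearCombination

section Clifford

variable {ι n : Type*} [DecidableEq ι] [Fintype n] [DecidableEq n]

def IsCliffordFamily (β : ι → Matrix n n ℂ) : Prop :=
  ∀ j k, β j * β k + β k * β j = (if j = k then (2 : ℂ) else 0) • 1

variable {β : ι → Matrix n n ℂ}

lemma IsCliffordFamily.comp_injective {κ : Type*} [DecidableEq κ] (hβ : IsCliffordFamily β)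
    {e : κ → ι} (he : e.Injective) : IsCliffordFamily (β ∘ e) := fun j k => by
  simpa [he.eq_iff] using hβ (e j) (e k)

lemma IsCliffordFamily.mul_self (hβ : IsCliffordFamily β) (j : ι) : β j * β j = 1 :=
  eq_of_add_self_eq_two_smul (by simpa using hβ j j)

lemma IsCliffordFamily.mul_eq_neg_mul (hβ : IsCliffordFamily β) {j k : ι} (hjk : j ≠ k) :
    β j * β k = -(β k * β j) :=
  eq_neg_of_add_eq_zero_left (by simpa [hjk] using hβ j k)

lemma IsCliffordFamily.sum_smul_mul_self [Fintype ι] (hβ : IsCliffordFamily β) (x : ι → ℝ) :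
    (∑ j, (x j : ℂ) • β j) * (∑ j, (x j : ℂ) • β j)
      = ((∑ j, x j ^ 2 : ℝ) : ℂ) • 1 := by
  apply eq_of_add_self_eq_two_smul
  have hsq : (∑ j, (x j : ℂ) • β j) * (∑ j, (x j : ℂ) • β j)
      = ∑ j, ∑ k, ((x j : ℂ) * x k) • (β j * β k) := by
    simp only [Finset.sum_mul_sum, smul_mul_smul_comm]
  calc _ = ∑ j, ∑ k, ((x j : ℂ) * x k) • (β j * β k + β k * β j) := by
        rw [hsq]
        nth_rw 2 [Finset.sum_comm]
        simp only [← Finset.sum_add_distrib, smul_add, mul_comm (x _ : ℂ) (x _)]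
    _ = ∑ j, ((x j : ℂ) * x j * 2) • (1 : Matrix n n ℂ) := by
        simp only [show ∀ j k, _ = _ from hβ, ite_smul, zero_smul, smul_ite, smul_zero,
          Finset.sum_ite_eq, Finset.mem_univ, if_true, smul_smul]
    _ = _ := by
        rw [← Finset.sum_smul, smul_smul]
        congr 1
        push_cast
        rw [Finset.mul_sum]
        exact Finset.sum_congr rfl fun j _ => by ring

end Clifford

section Dirac
variable {n : Type*} [Fintype n]

lemma sum_norm_sq_eq_re_star_dotProduct_self (u : n → ℂ) :
    ∑ i, ‖u i‖ ^ 2 = (star u ⬝ᵥ u).re := by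
  simp [dotProduct, Complex.re_sum, ← Complex.normSq_eq_norm_sq, Complex.normSq_apply,
    Complex.mul_re]

lemma star_mulVec_dotProduct_mulVec (M P : Matrix n n ℂ) (u v : n → ℂ) :
    star (M *ᵥ u) ⬝ᵥ (P *ᵥ v) = star u ⬝ᵥ ((Mᴴ * P) *ᵥ v) := by
  rw [star_mulVec, ← mulVec_mulVec]
  exact (dotProduct_mulVec _ _ _).symm

variable [DecidableEq n] {Γ A : Matrix n n ℂ}

lemma star_dotProduct_self_dirac (hΓ : Γ.IsHermitian) (hA : A.IsHermitian) (hΓ2 : Γ * Γ = 1)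
    (hA2 : A * A = 1) (hΓA : Γ * A = -(A * Γ)) (m : ℝ) (u v : n → ℂ) :
    star (-Complex.I • Γ *ᵥ v + (m : ℂ) • A *ᵥ u) ⬝ᵥ
        (-Complex.I • Γ *ᵥ v + (m : ℂ) • A *ᵥ u)
      = star v ⬝ᵥ v + (m : ℂ) ^ 2 * (star u ⬝ᵥ u)
        + m * (star v ⬝ᵥ ((-Complex.I • (A * Γ)) *ᵥ u)
          + star u ⬝ᵥ ((-Complex.I • (A * Γ)) *ᵥ v)) := by
  simp only [star_add, star_smul, add_dotProduct, dotProduct_add, smul_dotProduct,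
    dotProduct_smul, smul_eq_mul, star_mulVec_dotProduct_mulVec, hΓ.eq, hA.eq, hΓ2, hA2,
    smul_mulVec, one_mulVec, hΓA, neg_mulVec, dotProduct_neg, star_neg, Complex.star_def,
    Complex.conj_I, Complex.conj_ofReal]
  ring_nf
  rw [Complex.I_sq]
  ring

lemma sum_norm_sq_dirac (hΓ : Γ.IsHermitian) (hA : A.IsHermitian) (hΓ2 : Γ * Γ = 1)
    (hA2 : A * A = 1) (hΓA : Γ * A = -(A * Γ)) (m : ℝ) (u v : n → ℂ) :
    ∑ i, ‖(-Complex.I • Γ *ᵥ v + (m : ℂ) • A *ᵥ u) i‖ ^ 2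
      = ∑ i, ‖v i‖ ^ 2 + m ^ 2 * ∑ i, ‖u i‖ ^ 2
        + m * (star v ⬝ᵥ ((-Complex.I • (A * Γ)) *ᵥ u)
          + star u ⬝ᵥ ((-Complex.I • (A * Γ)) *ᵥ v)).re := by
  simp only [sum_norm_sq_eq_re_star_dotProduct_self,
    star_dotProduct_self_dirac hΓ hA hΓ2 hA2 hΓA, Complex.add_re, ← Complex.ofReal_pow,
    Complex.re_ofReal_mul]

end Dirac

section Calculus
variable {n : Type*} [Fintype n] (B : Matrix n n ℂ) {f f' : ℝ → n → ℂ}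

lemma hasDerivWithinAt_star_dotProduct_mulVec {s : Set ℝ} {t : ℝ}
    (hf : HasDerivWithinAt f (f' t) s t) :
    HasDerivWithinAt (fun τ => star (f τ) ⬝ᵥ (B *ᵥ f τ))
      (star (f' t) ⬝ᵥ (B *ᵥ f t) + star (f t) ⬝ᵥ (B *ᵥ f' t)) s t := by
  have hfi : ∀ i, HasDerivWithinAt (fun τ => f τ i) (f' t i) s t := hasDerivWithinAt_pi.1 hf
  have hBfi : ∀ i, HasDerivWithinAt (fun τ => (B *ᵥ f τ) i) ((B *ᵥ f' t) i) s t := fun i =>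
    HasDerivWithinAt.fun_sum fun k _ => (hfi k).const_mul (B i k)
  simp only [dotProduct, Pi.star_apply, ← Finset.sum_add_distrib]
  exact HasDerivWithinAt.fun_sum fun i _ => (hfi i).star.mul (hBfi i)

lemma continuousOn_star_dotProduct_mulVec {s : Set ℝ} {u v : ℝ → n → ℂ}
    (hu : ContinuousOn u s) (hv : ContinuousOn v s) :
    ContinuousOn (fun t => star (u t) ⬝ᵥ (B *ᵥ v t)) s := by
  have hΦ : Continuous fun p : (n → ℂ) × (n → ℂ) => star p.1 ⬝ᵥ (B *ᵥ p.2) :=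
    continuous_fst.star.dotProduct ((continuous_const (y := B)).matrix_mulVec continuous_snd)
  exact (hΦ.comp_continuousOn (hu.prodMk hv) :)

variable {a b : ℝ} (hab : a ≤ b) (hf : ∀ t ∈ Icc a b, HasDerivWithinAt f (f' t) (Icc a b) t)
  (hf' : ContinuousOn f' (Icc a b))
include hab hf hf'

lemma intervalIntegrable_re_deriv_star_dotProduct_mulVec :
    IntervalIntegrable
      (fun t => (star (f' t) ⬝ᵥ (B *ᵥ f t) + star (f t) ⬝ᵥ (B *ᵥ f' t)).re)
      volume a b := by
  have hfc : ContinuousOn f (Icc a b) := fun t ht => (hf t ht).continuousWithinAt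
  exact (Complex.continuous_re.comp_continuousOn
    ((continuousOn_star_dotProduct_mulVec B hf' hfc).add
      (continuousOn_star_dotProduct_mulVec B hfc hf'))).intervalIntegrable_of_Icc hab

lemma integral_re_deriv_star_dotProduct_mulVec :
    ∫ t in a..b, (star (f' t) ⬝ᵥ (B *ᵥ f t) + star (f t) ⬝ᵥ (B *ᵥ f' t)).re
      = (star (f b) ⬝ᵥ (B *ᵥ f b)).re - (star (f a) ⬝ᵥ (B *ᵥ f a)).re := by
  have hfc : ContinuousOn f (Icc a b) := fun t ht => (hf t ht).continuousWithinAt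
  refine intervalIntegral.integral_eq_sub_of_hasDeriv_right_of_le hab
    (Complex.continuous_re.comp_continuousOn (continuousOn_star_dotProduct_mulVec B hfc hfc))
    (fun t ht => ?_) (intervalIntegrable_re_deriv_star_dotProduct_mulVec B hab hf hf')
  have hderiv := Complex.reCLM.hasFDerivAt.comp_hasDerivWithinAt t
    (hasDerivWithinAt_star_dotProduct_mulVec B (hf t (Ioo_subset_Icc_self ht)))
  exact (hderiv.hasDerivAt (Icc_mem_nhds ht.1 ht.2)).hasDerivWithinAt

end Calculus

theorem transverse_dirac_square_identity_general (n N : ℕ)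
    (α : Fin (n + 1) → Matrix (Fin N) (Fin N) ℂ)
    (hHerm : ∀ j, (α j).IsHermitian)
    (hAnti : ∀ j k, α j * α k + α k * α j = (if j = k then (2 : ℂ) else 0) • 1)
    (x : Fin n → ℝ) (hx : ∑ j, x j ^ 2 = 1)
    (m : ℝ)
    (f f' : ℝ → Fin N → ℂ)
    (hf : ∀ t ∈ Set.Icc (-1 : ℝ) 1, HasDerivWithinAt f (f' t) (Set.Icc (-1 : ℝ) 1) t)
    (hf' : ContinuousOn f' (Set.Icc (-1 : ℝ) 1))
    (hbc1 : ((-Complex.I) • (α (Fin.last n) *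
        ∑ j : Fin n, (x j : ℂ) • α j.castSucc)).mulVec (f 1) = f 1)
    (hbc2 : ((-Complex.I) • (α (Fin.last n) *
        ∑ j : Fin n, (x j : ℂ) • α j.castSucc)).mulVec (f (-1)) = -f (-1)) :
    (∫ t in (-1 : ℝ)..1, ∑ i, ‖((-Complex.I) •
          (∑ j : Fin n, (x j : ℂ) • α j.castSucc).mulVec (f' t)
        + (m : ℂ) • (α (Fin.last n)).mulVec (f t)) i‖ ^ 2)
      = (∫ t in (-1 : ℝ)..1, ∑ i, ‖f' t i‖ ^ 2)
        + m ^ 2 * (∫ t in (-1 : ℝ)..1, ∑ i, ‖f t i‖ ^ 2)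
        + m * ((∑ i, ‖f 1 i‖ ^ 2) + ∑ i, ‖f (-1) i‖ ^ 2) := by
  have hα : IsCliffordFamily α := hAnti
  set A := α (Fin.last n)
  set Γ : Matrix (Fin N) (Fin N) ℂ := ∑ j : Fin n, (x j : ℂ) • α j.castSucc
  have hΓ2 : Γ * Γ = 1 := by
    simpa only [Function.comp_apply, hx, Complex.ofReal_one, one_smul] using
      (hα.comp_injective (Fin.castSucc_injective n)).sum_smul_mul_self x
  have hΓA : Γ * A = -(A * Γ) :=
    sum_smul_mul_eq_neg_mul_sum_smul (fun j => hα.mul_eq_neg_mul (Fin.castSucc_lt_last j).ne) _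
  have hΓH : Γ.IsHermitian := isHermitian_sum_ofReal_smul (fun j => hHerm _) x
  have hpt := sum_norm_sq_dirac (A := A) hΓH (hHerm _) hΓ2 (hα.mul_self _) hΓA m
  have hab : (-1 : ℝ) ≤ 1 := by norm_num
  have hftc := integral_re_deriv_star_dotProduct_mulVec (-Complex.I • (A * Γ)) hab hf hf'
  rw [hbc1, hbc2, dotProduct_neg, Complex.neg_re, ← sum_norm_sq_eq_re_star_dotProduct_self,
    ← sum_norm_sq_eq_re_star_dotProduct_self] at hftc
  have hfc : ContinuousOn f (Icc (-1) 1) := fun t ht => (hf t ht).continuousWithinAt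
  have hP : IntervalIntegrable (fun t => ∑ i, ‖f' t i‖ ^ 2) volume (-1) 1 :=
    (by fun_prop : ContinuousOn _ _).intervalIntegrable_of_Icc hab
  have hQ : IntervalIntegrable (fun t => m ^ 2 * ∑ i, ‖f t i‖ ^ 2) volume (-1) 1 :=
    (by fun_prop : ContinuousOn _ _).intervalIntegrable_of_Icc hab
  simp only [hpt]
  rw [intervalIntegral.integral_add (hP.add hQ)
      ((intervalIntegrable_re_deriv_star_dotProduct_mulVec _ hab hf hf').const_mul m),
    intervalIntegral.integral_add hP hQ, intervalIntegral.integral_const_mul,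
    intervalIntegral.integral_const_mul, hftc]
  ring

/-- For the transverse Dirac operator `T f = −i Γ(x) f' + m α_{n+1} f` with infinite mass
boundary conditions, one has
`‖T f‖² = ‖f'‖² + m² ‖f‖² + m (|f(1)|² + |f(−1)|²)` (squared `L²`-norms over `(−1,1)`
and Euclidean norms on `ℂ^N`). -/
theorem transverse_dirac_square_identity (n N : ℕ)
    (α : Fin (n + 1) → Matrix (Fin N) (Fin N) ℂ)
    (hHerm : ∀ j, (α j).IsHermitian)
    (hAnti : ∀ j k, α j * α k + α k * α j = (if j = k then (2 : ℂ) else 0) • 1)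
    (x : Fin n → ℝ) (hx : ∑ j, x j ^ 2 = 1)
    (m : ℝ) (hm : 0 ≤ m)
    (f f' : ℝ → Fin N → ℂ)
    (hf : ∀ t ∈ Set.Icc (-1 : ℝ) 1, HasDerivWithinAt f (f' t) (Set.Icc (-1 : ℝ) 1) t)
    (hf' : ContinuousOn f' (Set.Icc (-1 : ℝ) 1))
    (hbc1 : ((-Complex.I) • (α (Fin.last n) *
        ∑ j : Fin n, (x j : ℂ) • α j.castSucc)).mulVec (f 1) = f 1)
    (hbc2 : ((-Complex.I) • (α (Fin.last n) *
        ∑ j : Fin n, (x j : ℂ) • α j.castSucc)).mulVec (f (-1)) = -f (-1)) :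
    (∫ t in (-1 : ℝ)..1, ∑ i, ‖((-Complex.I) •
          (∑ j : Fin n, (x j : ℂ) • α j.castSucc).mulVec (f' t)
        + (m : ℂ) • (α (Fin.last n)).mulVec (f t)) i‖ ^ 2)
      = (∫ t in (-1 : ℝ)..1, ∑ i, ‖f' t i‖ ^ 2)
        + m ^ 2 * (∫ t in (-1 : ℝ)..1, ∑ i, ‖f t i‖ ^ 2)
        + m * ((∑ i, ‖f 1 i‖ ^ 2) + ∑ i, ‖f (-1) i‖ ^ 2) :=
  transverse_dirac_square_identity_general n N α hHerm hAnti x hx m f f' hf hf' hbc1 hbc2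
end

section
/- Let x ∈ ℝ^n with |x| = 1, let m ≥ 0, and let f, g : ℝ → ℂ^N be continuously differentiable on [−1, 1], each satisfying the boundary conditions −i α_{n+1} Γ(x) h(1) = h(1) and −i α_{n+1} Γ(x) h(−1) = −h(−1) (for h = f and h = g). Then ∫_{−1}^{1} ⟨−i Γ(x) f'(t) + m α_{n+1} f(t), g(t)⟩ dt = ∫_{−1}^{1} ⟨f(t), −i Γ(x) g'(t) + m α_{n+1} g(t)⟩ dt, where ⟨·,·⟩ is the Hermitian inner product on ℂ^N. -/
/-!
Write `G = Γ(x)` and `A = α_{n+1}`; both are Hermitian and anticommute. Pointwise,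
`⟨-i G f' + m A f, g⟩ - ⟨f, -i G g' + m A g⟩ = i (d/dt) ⟨f, G g⟩`, so the two integrals differ by
the boundary term `i [⟨f, G g⟩]_{-1}^{1}`. The matrix `B = -i A G` is Hermitian and anticommutes
with `G`, so `G` maps the `ε`-eigenspace of `B` into the `-ε`-eigenspace, which is orthogonal to
it. The boundary conditions put `f(±1)` and `g(±1)` in the same `±1`-eigenspace of `B`, hence
`⟨f(±1), G g(±1)⟩ = 0`.
-/

open Matrix Complex

section DotProduct

variable {ι : Type*} [Fintype ι]

@[fun_prop]
theorem ContinuousOn.dotProduct {X R : Type*} [TopologicalSpace X] [TopologicalSpace R] [Mul R]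
    [AddCommMonoid R] [ContinuousAdd R] [ContinuousMul R] {u v : X → ι → R} {s : Set X}
    (hu : ContinuousOn u s) (hv : ContinuousOn v s) : ContinuousOn (fun x => u x ⬝ᵥ v x) s := by
  rw [continuousOn_iff_continuous_domRestrict] at *
  exact hu.dotProduct hv

variable {𝕜 𝔸 : Type*} [NontriviallyNormedField 𝕜] [NormedCommRing 𝔸] [NormedAlgebra 𝕜 𝔸]
  {u v : 𝕜 → ι → 𝔸} {u' v' : ι → 𝔸} {s : Set 𝕜} {t : 𝕜}

theorem HasDerivWithinAt.dotProduct (hu : HasDerivWithinAt u u' s t)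
    (hv : HasDerivWithinAt v v' s t) :
    HasDerivWithinAt (fun τ => u τ ⬝ᵥ v τ) (u' ⬝ᵥ v t + u t ⬝ᵥ v') s t := by
  rw [_root_.dotProduct, _root_.dotProduct, ← Finset.sum_add_distrib]
  exact HasDerivWithinAt.fun_sum fun i _ =>
    (hasDerivWithinAt_pi.1 hu i).mul (hasDerivWithinAt_pi.1 hv i)

theorem HasDerivWithinAt.const_mulVec {κ : Type*} (M : Matrix κ ι 𝔸)
    (hv : HasDerivWithinAt v v' s t) : HasDerivWithinAt (fun τ => M *ᵥ v τ) (M *ᵥ v') s t :=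
  hasDerivWithinAt_pi.2 fun i => by
    simpa [mulVec] using (hasDerivWithinAt_const t s (M i)).dotProduct hv

theorem intervalIntegral.integral_deriv_dotProduct_eq_sub [CompleteSpace 𝔸] [NormedAlgebra ℝ 𝔸]
    {a b : ℝ} (hab : a ≤ b) {u u' v v' : ℝ → ι → 𝔸}
    (hu : ∀ t ∈ Set.Icc a b, HasDerivWithinAt u (u' t) (Set.Icc a b) t)
    (hu' : ContinuousOn u' (Set.Icc a b))
    (hv : ∀ t ∈ Set.Icc a b, HasDerivWithinAt v (v' t) (Set.Icc a b) t)
    (hv' : ContinuousOn v' (Set.Icc a b)) :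
    ∫ t in a..b, (u' t ⬝ᵥ v t + u t ⬝ᵥ v' t) = u b ⬝ᵥ v b - u a ⬝ᵥ v a := by
  have huc : ContinuousOn u (Set.Icc a b) := fun t ht => (hu t ht).continuousWithinAt
  have hvc : ContinuousOn v (Set.Icc a b) := fun t ht => (hv t ht).continuousWithinAt
  refine integral_eq_sub_of_hasDeriv_right_of_le hab (huc.dotProduct hvc) (fun t ht => ?_)
    (((hu'.dotProduct hvc).add (huc.dotProduct hv')).intervalIntegrable_of_Icc hab)
  have hIcc : Set.Icc a b ∈ nhds t := Icc_mem_nhds ht.1 ht.2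
  exact (((hu t (Set.Ioo_subset_Icc_self ht)).dotProduct
    (hv t (Set.Ioo_subset_Icc_self ht))).hasDerivAt hIcc).hasDerivWithinAt

end DotProduct

theorem Finset.mul_sum_smul_eq_neg_sum_smul_mul {R A ι : Type*} [CommRing R] [Ring A] [Algebra R A]
    (s : Finset ι) (a : A) (c : ι → R) (b : ι → A) (h : ∀ j ∈ s, a * b j = -(b j * a)) :
    a * ∑ j ∈ s, c j • b j = -((∑ j ∈ s, c j • b j) * a) := by
  rw [Finset.mul_sum, Finset.sum_mul, ← Finset.sum_neg_distrib]
  refine Finset.sum_congr rfl fun j hj => ?_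
  rw [mul_smul_comm, h j hj, smul_mul_assoc, smul_neg]

namespace Matrix

variable {ι : Type*} [Fintype ι]

omit [Fintype ι] in
theorem IsHermitian.sum_real_smul {κ : Type*} (s : Finset κ) (c : κ → ℝ) {β : κ → Matrix ι ι ℂ}
    (hβ : ∀ j ∈ s, (β j).IsHermitian) : (∑ j ∈ s, (c j : ℂ) • β j).IsHermitian :=
  isSelfAdjoint_sum s fun j hj => (hβ j hj).smul (Complex.conj_ofReal (c j))

theorem star_dotProduct_eq_zero_of_mulVec_eq_smul {B : Matrix ι ι ℂ} (hB : B.IsHermitian)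
    {μ ν : ℝ} (hμν : μ ≠ ν) {u v : ι → ℂ} (hu : B *ᵥ u = (μ : ℂ) • u)
    (hv : B *ᵥ v = (ν : ℂ) • v) : star u ⬝ᵥ v = 0 := by
  have h : (μ : ℂ) * (star u ⬝ᵥ v) = ν * (star u ⬝ᵥ v) := by
    calc (μ : ℂ) * (star u ⬝ᵥ v) = star (B *ᵥ u) ⬝ᵥ v := by
          simp [hu, smul_dotProduct]
      _ = star u ⬝ᵥ B *ᵥ v := by rw [star_mulVec, ← dotProduct_mulVec, hB.eq]
      _ = ν * (star u ⬝ᵥ v) := by rw [hv, dotProduct_smul, smul_eq_mul]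
  exact (mul_eq_mul_right_iff.1 h).resolve_left (by exact_mod_cast hμν)

theorem mulVec_mulVec_eq_neg_smul_of_mul_eq_neg {R : Type*} [CommRing R] {B G : Matrix ι ι R}
    (hGB : G * B = -(B * G)) {ε : R} {v : ι → R} (hv : B *ᵥ v = ε • v) :
    B *ᵥ (G *ᵥ v) = -ε • (G *ᵥ v) := by
  rw [mulVec_mulVec, ← neg_neg (B * G), ← hGB, neg_mulVec, ← mulVec_mulVec, hv, mulVec_smul,
    neg_smul]

variable {A G : Matrix ι ι ℂ}

theorem isHermitian_neg_I_smul_mul (hA : A.IsHermitian) (hG : G.IsHermitian)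
    (hAG : A * G = -(G * A)) : (-I • (A * G)).IsHermitian := by
  rw [IsHermitian, conjTranspose_smul, conjTranspose_mul, hA.eq, hG.eq, ← neg_neg (G * A), ← hAG]
  simp

theorem star_dotProduct_mulVec_eq_zero_of_boundary (hA : A.IsHermitian) (hG : G.IsHermitian)
    (hAG : A * G = -(G * A)) {ε : ℝ} (hε : ε ≠ 0) {u v : ι → ℂ}
    (hu : (-I • (A * G)) *ᵥ u = (ε : ℂ) • u) (hv : (-I • (A * G)) *ᵥ v = (ε : ℂ) • v) :
    star u ⬝ᵥ G *ᵥ v = 0 := by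
  have hGB : G * (-I • (A * G)) = -((-I • (A * G)) * G) := by
    rw [mul_smul_comm, smul_mul_assoc, ← mul_assoc, ← neg_neg (G * A), ← hAG]
    simp [mul_assoc]
  have hGv := mulVec_mulVec_eq_neg_smul_of_mul_eq_neg hGB hv
  rw [← Complex.ofReal_neg] at hGv
  exact star_dotProduct_eq_zero_of_mulVec_eq_smul (isHermitian_neg_I_smul_mul hA hG hAG)
    (by contrapose! hε; linarith) hu hGv

/-- Green's formula for `T u = -i G u' + m A u`: the defect is `i (d/dt) ⟨u, G v⟩`. -/
theorem star_dirac_dotProduct_eq (hA : A.IsHermitian) (hG : G.IsHermitian) (m : ℝ)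
    (u u' v v' : ι → ℂ) :
    star (-I • G *ᵥ u' + (m : ℂ) • A *ᵥ u) ⬝ᵥ v
      = star u ⬝ᵥ (-I • G *ᵥ v' + (m : ℂ) • A *ᵥ v)
        + I * (star u' ⬝ᵥ G *ᵥ v + star u ⬝ᵥ G *ᵥ v') := by
  simp only [star_add, star_smul, star_mulVec, hA.eq, hG.eq, add_dotProduct, dotProduct_add,
    smul_dotProduct, dotProduct_smul, ← dotProduct_mulVec, smul_eq_mul, star_neg, RCLike.star_def,
    conj_I, neg_neg, conj_ofReal, neg_mul]
  ring

theorem integral_star_dirac_dotProduct_symm (hA : A.IsHermitian) (hG : G.IsHermitian) (m : ℝ)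
    {a b : ℝ} (hab : a ≤ b) {f f' g g' : ℝ → ι → ℂ}
    (hf : ∀ t ∈ Set.Icc a b, HasDerivWithinAt f (f' t) (Set.Icc a b) t)
    (hf' : ContinuousOn f' (Set.Icc a b))
    (hg : ∀ t ∈ Set.Icc a b, HasDerivWithinAt g (g' t) (Set.Icc a b) t)
    (hg' : ContinuousOn g' (Set.Icc a b))
    (hbdry : star (f b) ⬝ᵥ G *ᵥ g b = star (f a) ⬝ᵥ G *ᵥ g a) :
    ∫ t in a..b, star (-I • G *ᵥ f' t + (m : ℂ) • A *ᵥ f t) ⬝ᵥ g t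
      = ∫ t in a..b, star (f t) ⬝ᵥ (-I • G *ᵥ g' t + (m : ℂ) • A *ᵥ g t) := by
  have hfc : ContinuousOn f (Set.Icc a b) := fun t ht => (hf t ht).continuousWithinAt
  have hgc : ContinuousOn g (Set.Icc a b) := fun t ht => (hg t ht).continuousWithinAt
  have hRHS : ContinuousOn (fun t => star (f t) ⬝ᵥ (-I • G *ᵥ g' t + (m : ℂ) • A *ᵥ g t))
      (Set.Icc a b) := by fun_prop
  have hD : ContinuousOn (fun t => star (f' t) ⬝ᵥ G *ᵥ g t + star (f t) ⬝ᵥ G *ᵥ g' t)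
      (Set.Icc a b) := by fun_prop
  have hFTC := intervalIntegral.integral_deriv_dotProduct_eq_sub (u := fun t => star (f t)) hab
    (fun t ht => (hf t ht).star) hf'.star (fun t ht => (hg t ht).const_mulVec G) (by fun_prop)
  calc ∫ t in a..b, star (-I • G *ᵥ f' t + (m : ℂ) • A *ᵥ f t) ⬝ᵥ g t
      = ∫ t in a..b, (star (f t) ⬝ᵥ (-I • G *ᵥ g' t + (m : ℂ) • A *ᵥ g t)
          + I * (star (f' t) ⬝ᵥ G *ᵥ g t + star (f t) ⬝ᵥ G *ᵥ g' t)) :=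
        intervalIntegral.integral_congr fun t _ => star_dirac_dotProduct_eq hA hG m _ _ _ _
    _ = (∫ t in a..b, star (f t) ⬝ᵥ (-I • G *ᵥ g' t + (m : ℂ) • A *ᵥ g t))
          + I * (star (f b) ⬝ᵥ G *ᵥ g b - star (f a) ⬝ᵥ G *ᵥ g a) := by
        rw [intervalIntegral.integral_add (hRHS.intervalIntegrable_of_Icc hab)
          ((hD.intervalIntegrable_of_Icc hab).const_mul I), intervalIntegral.integral_const_mul,
          hFTC]
    _ = ∫ t in a..b, star (f t) ⬝ᵥ (-I • G *ᵥ g' t + (m : ℂ) • A *ᵥ g t) := by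
        rw [hbdry, sub_self, mul_zero, add_zero]

end Matrix

theorem transverse_dirac_symmetric_general (n N : ℕ)
    (α : Fin (n + 1) → Matrix (Fin N) (Fin N) ℂ)
    (hHerm : ∀ j, (α j).IsHermitian)
    (hAnti : ∀ j k, α j * α k + α k * α j = (if j = k then (2 : ℂ) else 0) • 1)
    (x : Fin n → ℝ)
    (m : ℝ)
    (f f' g g' : ℝ → Fin N → ℂ)
    (hf : ∀ t ∈ Set.Icc (-1 : ℝ) 1, HasDerivWithinAt f (f' t) (Set.Icc (-1 : ℝ) 1) t)
    (hf' : ContinuousOn f' (Set.Icc (-1 : ℝ) 1))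
    (hg : ∀ t ∈ Set.Icc (-1 : ℝ) 1, HasDerivWithinAt g (g' t) (Set.Icc (-1 : ℝ) 1) t)
    (hg' : ContinuousOn g' (Set.Icc (-1 : ℝ) 1))
    (hbcf1 : ((-Complex.I) • (α (Fin.last n) *
        ∑ j : Fin n, (x j : ℂ) • α j.castSucc)).mulVec (f 1) = f 1)
    (hbcf2 : ((-Complex.I) • (α (Fin.last n) *
        ∑ j : Fin n, (x j : ℂ) • α j.castSucc)).mulVec (f (-1)) = -f (-1))
    (hbcg1 : ((-Complex.I) • (α (Fin.last n) *
        ∑ j : Fin n, (x j : ℂ) • α j.castSucc)).mulVec (g 1) = g 1)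
    (hbcg2 : ((-Complex.I) • (α (Fin.last n) *
        ∑ j : Fin n, (x j : ℂ) • α j.castSucc)).mulVec (g (-1)) = -g (-1)) :
    (∫ t in (-1 : ℝ)..1, ∑ i, (starRingEnd ℂ) (((-Complex.I) •
          (∑ j : Fin n, (x j : ℂ) • α j.castSucc).mulVec (f' t)
        + (m : ℂ) • (α (Fin.last n)).mulVec (f t)) i) * g t i)
      = ∫ t in (-1 : ℝ)..1, ∑ i, (starRingEnd ℂ) (f t i) * (((-Complex.I) •
          (∑ j : Fin n, (x j : ℂ) • α j.castSucc).mulVec (g' t)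
        + (m : ℂ) • (α (Fin.last n)).mulVec (g t)) i) := by
  set Γ := ∑ j : Fin n, (x j : ℂ) • α j.castSucc
  have hΓ : Γ.IsHermitian := IsHermitian.sum_real_smul _ x fun j _ => hHerm j.castSucc
  have hAΓ : α (Fin.last n) * Γ = -(Γ * α (Fin.last n)) :=
    Finset.mul_sum_smul_eq_neg_sum_smul_mul _ _ _ _ fun j _ => eq_neg_of_add_eq_zero_left <| by
      simpa [(Fin.castSucc_lt_last j).ne'] using hAnti (Fin.last n) j.castSucc
  exact integral_star_dirac_dotProduct_symm (hHerm _) hΓ m (by norm_num) hf hf' hg hg' (by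
    rw [star_dotProduct_mulVec_eq_zero_of_boundary (hHerm _) hΓ hAΓ one_ne_zero
        (by simpa using hbcf1) (by simpa using hbcg1),
      star_dotProduct_mulVec_eq_zero_of_boundary (hHerm _) hΓ hAΓ (neg_ne_zero.2 one_ne_zero)
        (by simpa using hbcf2) (by simpa using hbcg2)])

/-- Symmetry of the transverse Dirac operator `T h = −i Γ(x) h' + m α_{n+1} h` with
infinite mass boundary conditions:
`∫ ⟨T f, g⟩ dt = ∫ ⟨f, T g⟩ dt` for the Hermitian inner product on `ℂ^N`. -/
theorem transverse_dirac_symmetric (n N : ℕ)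
    (α : Fin (n + 1) → Matrix (Fin N) (Fin N) ℂ)
    (hHerm : ∀ j, (α j).IsHermitian)
    (hAnti : ∀ j k, α j * α k + α k * α j = (if j = k then (2 : ℂ) else 0) • 1)
    (x : Fin n → ℝ) (hx : ∑ j, x j ^ 2 = 1)
    (m : ℝ) (hm : 0 ≤ m)
    (f f' g g' : ℝ → Fin N → ℂ)
    (hf : ∀ t ∈ Set.Icc (-1 : ℝ) 1, HasDerivWithinAt f (f' t) (Set.Icc (-1 : ℝ) 1) t)
    (hf' : ContinuousOn f' (Set.Icc (-1 : ℝ) 1))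
    (hg : ∀ t ∈ Set.Icc (-1 : ℝ) 1, HasDerivWithinAt g (g' t) (Set.Icc (-1 : ℝ) 1) t)
    (hg' : ContinuousOn g' (Set.Icc (-1 : ℝ) 1))
    (hbcf1 : ((-Complex.I) • (α (Fin.last n) *
        ∑ j : Fin n, (x j : ℂ) • α j.castSucc)).mulVec (f 1) = f 1)
    (hbcf2 : ((-Complex.I) • (α (Fin.last n) *
        ∑ j : Fin n, (x j : ℂ) • α j.castSucc)).mulVec (f (-1)) = -f (-1))
    (hbcg1 : ((-Complex.I) • (α (Fin.last n) *
        ∑ j : Fin n, (x j : ℂ) • α j.castSucc)).mulVec (g 1) = g 1)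
    (hbcg2 : ((-Complex.I) • (α (Fin.last n) *
        ∑ j : Fin n, (x j : ℂ) • α j.castSucc)).mulVec (g (-1)) = -g (-1)) :
    (∫ t in (-1 : ℝ)..1, ∑ i, (starRingEnd ℂ) (((-Complex.I) •
          (∑ j : Fin n, (x j : ℂ) • α j.castSucc).mulVec (f' t)
        + (m : ℂ) • (α (Fin.last n)).mulVec (f t)) i) * g t i)
      = ∫ t in (-1 : ℝ)..1, ∑ i, (starRingEnd ℂ) (f t i) * (((-Complex.I) •
          (∑ j : Fin n, (x j : ℂ) • α j.castSucc).mulVec (g' t)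
        + (m : ℂ) • (α (Fin.last n)).mulVec (g t)) i) :=
  transverse_dirac_symmetric_general n N α hHerm hAnti x m f f' g g' hf hf' hg hg' hbcf1 hbcf2 hbcg1
    hbcg2
end

section
/- Assume N is even, α_{n+1} = [[I_{N/2}, 0], [0, −I_{N/2}]] in 2×2 block form, and for each x ∈ ℝ^n the matrix Γ(x) has the block form [[0, β(x)*], [β(x), 0]] where β(x) is an (N/2)×(N/2) matrix with β(x)*β(x) = β(x)β(x)* = |x|² I_{N/2}. Let x ∈ ℝ^n with |x| = 1, m ≥ 0, and let k > 0 satisfy k·cos(2k) + m·sin(2k) = 0; set E := √(k² + m²). Then for every C ∈ ℂ^{N/2}, the function f(t) := k cos(k(t+1))·(C, −i β(x) C) + sin(k(t+1))·((E+m) C, i (E−m) β(x) C) satisfies −i Γ(x) f'(t) + m α_{n+1} f(t) = E f(t) for all t ∈ [−1, 1], together with the boundary conditions −i α_{n+1} Γ(x) f(1) = f(1) and −i α_{n+1} Γ(x) f(−1) = −f(−1). -/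
open Matrix

/-! The solution is a combination `(a(t) C, i b(t) β(x) C)` of two fixed vectors, and because
`β(x)* β(x) = 1` the block matrices `Γ(x)` and `α_{n+1}` act on such combinations by swapping, resp.
negating, the real coefficient functions. The eigenvalue equation then becomes the linear system
`a' = -(E + m) b`, `b' = (E - m) a`, which holds since `E² = k² + m²`, and the boundary conditions
become `b(1) = a(1)` (the quantisation condition on `k`) and `b(-1) = -a(-1)`. -/

section BlockVec

variable {ι κ R : Type*}

def blockVec [Mul R] (u : ι → R) (v : κ → R) (a b : R) : ι ⊕ κ → R :=
  Sum.elim (a • u) (b • v)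

variable [CommRing R] (u : ι → R) (v : κ → R)

theorem blockVec_add (a b a' b' : R) :
    blockVec u v a b + blockVec u v a' b' = blockVec u v (a + a') (b + b') := by
  ext (i | i) <;> simp [blockVec, add_mul]

theorem neg_blockVec (a b : R) : -blockVec u v a b = blockVec u v (-a) (-b) := by
  ext (i | i) <;> simp [blockVec]

theorem smul_blockVec (c a b : R) : c • blockVec u v a b = blockVec u v (c * a) (c * b) := by
  ext (i | i) <;> simp [blockVec, mul_assoc]

variable [Fintype ι] [Fintype κ]

theorem fromBlocks_antidiag_mulVec_blockVec {B : Matrix κ ι R} {B' : Matrix ι κ R}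
    (hB : B *ᵥ u = v) (hB' : B' *ᵥ v = u) (a b : R) :
    fromBlocks 0 B' B 0 *ᵥ blockVec u v a b = blockVec u v b a := by
  simp only [blockVec, fromBlocks_mulVec, Sum.elim_comp_inl, Sum.elim_comp_inr, mulVec_smul,
    hB, hB', zero_mulVec, smul_zero, zero_add, add_zero]

theorem fromBlocks_one_neg_one_mulVec_blockVec [DecidableEq ι] [DecidableEq κ] (a b : R) :
    fromBlocks (1 : Matrix ι ι R) 0 0 (-1) *ᵥ blockVec u v a b = blockVec u v a (-b) := by
  simp only [blockVec, fromBlocks_mulVec, Sum.elim_comp_inl, Sum.elim_comp_inr, one_mulVec,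
    neg_mulVec, zero_mulVec, zero_add, add_zero, neg_smul]

end BlockVec

theorem HasDerivAt.blockVec {𝕜 𝕜' ι κ : Type*} [NontriviallyNormedField 𝕜]
    [NontriviallyNormedField 𝕜'] [NormedAlgebra 𝕜 𝕜'] [Fintype ι] [Fintype κ]
    (u : ι → 𝕜') (v : κ → 𝕜') {a b : 𝕜 → 𝕜'} {a' b' : 𝕜'} {t : 𝕜}
    (ha : HasDerivAt a a' t) (hb : HasDerivAt b b' t) :
    HasDerivAt (fun t ↦ _root_.blockVec u v (a t) (b t)) (_root_.blockVec u v a' b') t := by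
  have hsplit : ∀ a b : 𝕜',
      _root_.blockVec u v a b = a • Sum.elim u (0 : κ → 𝕜') + b • Sum.elim (0 : ι → 𝕜') v := by
    intro a b
    ext (i | i) <;> simp [_root_.blockVec]
  simp only [hsplit]
  exact (ha.smul_const _).add (hb.smul_const _)

namespace TransverseDirac

open Real

variable (k m E : ℝ)

noncomputable def upper (t : ℝ) : ℝ := k * cos (k * (t + 1)) + (E + m) * sin (k * (t + 1))

noncomputable def lower (t : ℝ) : ℝ := -(k * cos (k * (t + 1))) + (E - m) * sin (k * (t + 1))

variable {k m E}

theorem hasDerivAt_phase (t : ℝ) : HasDerivAt (fun t ↦ k * (t + 1)) k t := by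
  simpa using ((hasDerivAt_id t).add_const 1).const_mul k

theorem hasDerivAt_upper (hE : E ^ 2 = k ^ 2 + m ^ 2) (t : ℝ) :
    HasDerivAt (upper k m E) (-(E + m) * lower k m E t) t := by
  refine (((hasDerivAt_phase t).cos.const_mul k).add
    ((hasDerivAt_phase t).sin.const_mul (E + m))).congr_deriv ?_
  unfold lower
  linear_combination sin (k * (t + 1)) * hE

theorem hasDerivAt_lower (hE : E ^ 2 = k ^ 2 + m ^ 2) (t : ℝ) :
    HasDerivAt (lower k m E) ((E - m) * upper k m E t) t := by
  refine (((hasDerivAt_phase t).cos.const_mul k).neg.add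
    ((hasDerivAt_phase t).sin.const_mul (E - m))).congr_deriv ?_
  unfold upper
  linear_combination -sin (k * (t + 1)) * hE

theorem upper_neg_one : upper k m E (-1) = k := by simp [upper]

theorem lower_neg_one : lower k m E (-1) = -k := by simp [lower]

theorem lower_one (h : k * cos (2 * k) + m * sin (2 * k) = 0) :
    lower k m E 1 = upper k m E 1 := by
  unfold lower upper
  rw [show k * (1 + 1) = 2 * k by ring]
  linear_combination -2 * h

end TransverseDirac

open TransverseDirac in
theorem transverse_dirac_eigenfunction_general (n M : ℕ)
    (α : Fin (n + 1) → Matrix (Fin M ⊕ Fin M) (Fin M ⊕ Fin M) ℂ)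
    (hlast : α (Fin.last n) = Matrix.fromBlocks 1 0 0 (-1))
    (β : (Fin n → ℝ) → Matrix (Fin M) (Fin M) ℂ)
    (hblock : ∀ x : Fin n → ℝ,
      (∑ j : Fin n, (x j : ℂ) • α j.castSucc) = Matrix.fromBlocks 0 (β x)ᴴ (β x) 0)
    (hβ : ∀ x : Fin n → ℝ,
      (β x)ᴴ * β x = ((∑ j, x j ^ 2 : ℝ) : ℂ) • 1 ∧
      β x * (β x)ᴴ = ((∑ j, x j ^ 2 : ℝ) : ℂ) • 1)
    (x : Fin n → ℝ) (hx : ∑ j, x j ^ 2 = 1)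
    (m : ℝ)
    (k : ℝ)
    (heq : k * Real.cos (2 * k) + m * Real.sin (2 * k) = 0)
    (E : ℝ) (hE : E = Real.sqrt (k ^ 2 + m ^ 2))
    (C : Fin M → ℂ)
    (f : ℝ → (Fin M ⊕ Fin M) → ℂ)
    (hf : ∀ t : ℝ, f t =
      ((k * Real.cos (k * (t + 1)) : ℝ) : ℂ) •
        Sum.elim C (fun i => (-Complex.I) * ((β x).mulVec C) i)
      + ((Real.sin (k * (t + 1)) : ℝ) : ℂ) •
        Sum.elim (fun i => ((E + m : ℝ) : ℂ) * C i)
          (fun i => Complex.I * ((E - m : ℝ) : ℂ) * ((β x).mulVec C) i)) :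
    (∀ t ∈ Set.Icc (-1 : ℝ) 1,
      (-Complex.I) • (∑ j : Fin n, (x j : ℂ) • α j.castSucc).mulVec (deriv f t)
        + (m : ℂ) • (α (Fin.last n)).mulVec (f t) = (E : ℂ) • f t) ∧
    ((-Complex.I) • (α (Fin.last n) *
        ∑ j : Fin n, (x j : ℂ) • α j.castSucc)).mulVec (f 1) = f 1 ∧
    ((-Complex.I) • (α (Fin.last n) *
        ∑ j : Fin n, (x j : ℂ) • α j.castSucc)).mulVec (f (-1)) = -f (-1) := by
  set w := β x *ᵥ C with hw
  have hβw : (β x)ᴴ *ᵥ w = C := by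
    rw [hw, mulVec_mulVec, (hβ x).1, hx, Complex.ofReal_one, one_smul, one_mulVec]
  have hE2 : E ^ 2 = k ^ 2 + m ^ 2 := hE ▸ Real.sq_sqrt (by positivity)
  have hf' : f = fun t ↦ blockVec C w (upper k m E t) (Complex.I * lower k m E t) := by
    ext t (i | i) <;>
      simp only [hf, blockVec, upper, lower, Pi.add_apply, Pi.smul_apply, Sum.elim_inl,
        Sum.elim_inr, smul_eq_mul] <;> push_cast <;> ring
  have hderiv : ∀ t, deriv f t = blockVec C w ((-(E + m) * lower k m E t : ℝ) : ℂ)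
      (Complex.I * ((E - m) * upper k m E t : ℝ)) := fun t ↦ by
    rw [hf']
    exact (((hasDerivAt_upper hE2 t).ofReal_comp).blockVec C w
      (((hasDerivAt_lower hE2 t).ofReal_comp).const_mul _)).deriv
  rw [hblock x, hlast]
  refine ⟨fun t _ ↦ ?_, ?_, ?_⟩
  · rw [hderiv, congrFun hf' t, fromBlocks_antidiag_mulVec_blockVec C w rfl hβw,
      fromBlocks_one_neg_one_mulVec_blockVec, smul_blockVec, smul_blockVec, smul_blockVec,
      blockVec_add]
    congr 1
    · push_cast
      linear_combination -((E - m : ℂ) * upper k m E t) * Complex.I_sq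
    · push_cast
      ring
  · rw [smul_mulVec, ← mulVec_mulVec, congrFun hf' 1,
      fromBlocks_antidiag_mulVec_blockVec C w rfl hβw, fromBlocks_one_neg_one_mulVec_blockVec,
      smul_blockVec, lower_one heq]
    congr 1
    · linear_combination -(upper k m E 1 : ℂ) * Complex.I_sq
    · ring
  · rw [smul_mulVec, ← mulVec_mulVec, congrFun hf' (-1),
      fromBlocks_antidiag_mulVec_blockVec C w rfl hβw, fromBlocks_one_neg_one_mulVec_blockVec,
      smul_blockVec, neg_blockVec, upper_neg_one, lower_neg_one]
    congr 1 <;> push_cast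
    · linear_combination (k : ℂ) * Complex.I_sq
    · ring

/-- Explicit eigenfunctions of the transverse Dirac operator: in the block representation
with `α_{n+1} = diag(I, −I)` and `Γ(x) = [[0, β(x)*],[β(x), 0]]`, for `|x| = 1`, `m ≥ 0`,
`k > 0` with `k cos(2k) + m sin(2k) = 0` and `E = √(k² + m²)`, the function
`f(t) = k cos(k(t+1))·(C, −iβ(x)C) + sin(k(t+1))·((E+m)C, i(E−m)β(x)C)` satisfies
`−i Γ(x) f'(t) + m α_{n+1} f(t) = E f(t)` on `[−1,1]` with the infinite mass boundary
conditions. -/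
theorem transverse_dirac_eigenfunction (n M : ℕ)
    (α : Fin (n + 1) → Matrix (Fin M ⊕ Fin M) (Fin M ⊕ Fin M) ℂ)
    (hHerm : ∀ j, (α j).IsHermitian)
    (hAnti : ∀ j k, α j * α k + α k * α j = (if j = k then (2 : ℂ) else 0) • 1)
    (hlast : α (Fin.last n) = Matrix.fromBlocks 1 0 0 (-1))
    (β : (Fin n → ℝ) → Matrix (Fin M) (Fin M) ℂ)
    (hblock : ∀ x : Fin n → ℝ,
      (∑ j : Fin n, (x j : ℂ) • α j.castSucc) = Matrix.fromBlocks 0 (β x)ᴴ (β x) 0)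
    (hβ : ∀ x : Fin n → ℝ,
      (β x)ᴴ * β x = ((∑ j, x j ^ 2 : ℝ) : ℂ) • 1 ∧
      β x * (β x)ᴴ = ((∑ j, x j ^ 2 : ℝ) : ℂ) • 1)
    (x : Fin n → ℝ) (hx : ∑ j, x j ^ 2 = 1)
    (m : ℝ) (hm : 0 ≤ m)
    (k : ℝ) (hk : 0 < k)
    (heq : k * Real.cos (2 * k) + m * Real.sin (2 * k) = 0)
    (E : ℝ) (hE : E = Real.sqrt (k ^ 2 + m ^ 2))
    (C : Fin M → ℂ)
    (f : ℝ → (Fin M ⊕ Fin M) → ℂ)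
    (hf : ∀ t : ℝ, f t =
      ((k * Real.cos (k * (t + 1)) : ℝ) : ℂ) •
        Sum.elim C (fun i => (-Complex.I) * ((β x).mulVec C) i)
      + ((Real.sin (k * (t + 1)) : ℝ) : ℂ) •
        Sum.elim (fun i => ((E + m : ℝ) : ℂ) * C i)
          (fun i => Complex.I * ((E - m : ℝ) : ℂ) * ((β x).mulVec C) i)) :
    (∀ t ∈ Set.Icc (-1 : ℝ) 1,
      (-Complex.I) • (∑ j : Fin n, (x j : ℂ) • α j.castSucc).mulVec (deriv f t)
        + (m : ℂ) • (α (Fin.last n)).mulVec (f t) = (E : ℂ) • f t) ∧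
    ((-Complex.I) • (α (Fin.last n) *
        ∑ j : Fin n, (x j : ℂ) • α j.castSucc)).mulVec (f 1) = f 1 ∧
    ((-Complex.I) • (α (Fin.last n) *
        ∑ j : Fin n, (x j : ℂ) • α j.castSucc)).mulVec (f (-1)) = -f (-1) :=
  transverse_dirac_eigenfunction_general n M α hlast β hblock hβ x hx m k heq E hE C f hf
end

section
/- For δ ≥ 0 let k_1(δ) denote the unique solution in [π/4, π/2] of δ·sin(2k) + k·cos(2k) = 0, set E_1(δ)² := δ² + k_1(δ)², and define N_δ > 0 by N_δ^{−2} = 2·(2E_1(δ)² − δ²·sin(4k_1(δ))/(2k_1(δ)) + δ·sin²(2k_1(δ))). Then there exist constants C > 0 and δ_0 > 0 such that for all δ ∈ [0, δ_0] one has |N_δ − 2/π| ≤ C·δ. -/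
open Real

set_option maxHeartbeats 1000000 in
/-- Asymptotics of the normalization constant: with `k_1(δ)` the unique root in
`[π/4, π/2]` of `δ sin(2k) + k cos(2k) = 0`, `E_1(δ)² = δ² + k_1(δ)²` and `N_δ > 0`
defined by `N_δ^{−2} = 2(2E_1(δ)² − δ² sin(4k_1(δ))/(2k_1(δ)) + δ sin²(2k_1(δ)))`,
one has `N_δ = 2/π + O(δ)` as `δ → 0⁺`. -/
theorem normalization_constant_asymptotics (k1 Nδ : ℝ → ℝ)
    (hk1 : ∀ δ : ℝ, 0 ≤ δ → k1 δ ∈ Set.Icc (π / 4) (π / 2) ∧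
      δ * Real.sin (2 * k1 δ) + k1 δ * Real.cos (2 * k1 δ) = 0)
    (hNpos : ∀ δ : ℝ, 0 ≤ δ → 0 < Nδ δ)
    (hNdef : ∀ δ : ℝ, 0 ≤ δ →
      ((Nδ δ)⁻¹) ^ 2 = 2 * (2 * (δ ^ 2 + (k1 δ) ^ 2)
        - δ ^ 2 * Real.sin (4 * k1 δ) / (2 * k1 δ)
        + δ * Real.sin (2 * k1 δ) ^ 2)) :
    ∃ C > 0, ∃ δ₀ > 0, ∀ δ ∈ Set.Icc (0 : ℝ) δ₀, |Nδ δ - 2 / π| ≤ C * δ := by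
  refine ⟨1000, by norm_num, 1/100, by norm_num, ?_⟩
  intro δ hδ
  obtain ⟨hδ0, hδ1⟩ := hδ
  obtain ⟨⟨hk1l, hk1u⟩, heq⟩ := hk1 δ hδ0
  have hπ : (0:ℝ) < π := Real.pi_pos
  have hπ3 : (3.14:ℝ) < π := by
    have := Real.pi_gt_d6; linarith
  have hπ4 : π < 3.15 := Real.pi_lt_d2
  have hk1pos : 0 < k1 δ := lt_of_lt_of_le (by linarith) hk1l
  set N := Nδ δ with hN
  set k := k1 δ with hk
  clear_value N k
  have hNp : 0 < N := by rw [hN]; exact hNpos δ hδ0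
  -- trig bounds
  have hs1 : Real.sin (2 * k) ≤ 1 := Real.sin_le_one _
  have hs0 : 0 ≤ Real.sin (2 * k) := by
    apply Real.sin_nonneg_of_nonneg_of_le_pi
    · positivity
    · linarith
  have hs41 : Real.sin (4 * k) ≤ 1 := Real.sin_le_one _
  have hs42 : -1 ≤ Real.sin (4 * k) := Real.neg_one_le_sin _
  have hssq : Real.sin (2 * k) ^ 2 ≤ 1 := by nlinarith
  have hcos : Real.cos (2 * k) ≤ 0 := by
    apply Real.cos_nonpos_of_pi_div_two_le_of_le
    · linarith
    · linarith
  -- from the equation: k * (-cos(2k)) = δ * sin(2k) ≤ δ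
  have hkc : k * (-Real.cos (2 * k)) ≤ δ := by nlinarith [heq]
  -- Jordan inequality gives |k - π/4| ≤ δ
  have ht0 : 0 ≤ 2 * k - π / 2 := by linarith
  have ht1 : 2 * k - π / 2 ≤ π / 2 := by linarith
  have hJ : 2 / π * (2 * k - π / 2) ≤ Real.sin (2 * k - π / 2) :=
    Real.mul_le_sin ht0 ht1
  have hsinsub : Real.sin (2 * k - π / 2) = -Real.cos (2 * k) :=
    Real.sin_sub_pi_div_two _
  have hkd : k - π / 4 ≤ δ := by
    rw [hsinsub] at hJ
    have h1 : k * (2 / π * (2 * k - π / 2)) ≤ δ := by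
      calc k * (2 / π * (2 * k - π / 2)) ≤ k * (-Real.cos (2 * k)) := by
            apply mul_le_mul_of_nonneg_left hJ (le_of_lt hk1pos)
        _ ≤ δ := hkc
    have h2 : 2 / π * (k * (2 * k - π / 2)) ≤ δ := by
      calc 2 / π * (k * (2 * k - π / 2)) = k * (2 / π * (2 * k - π / 2)) := by ring
        _ ≤ δ := h1
    rw [div_mul_eq_mul_div, div_le_iff₀ hπ] at h2
    have h3 : π / 4 * (2 * k - π / 2) ≤ k * (2 * k - π / 2) :=
      mul_le_mul_of_nonneg_right hk1l ht0
    nlinarith [h2, h3]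
  have hkd0 : 0 ≤ k - π / 4 := by linarith
  -- bounds on the division term
  set d : ℝ := δ ^ 2 * Real.sin (4 * k) / (2 * k) with hd
  have h2k : (1:ℝ) ≤ 2 * k := by linarith
  have hd1 : d ≤ δ ^ 2 := by
    rw [hd, div_le_iff₀ (by positivity : (0:ℝ) < 2 * k)]
    nlinarith [sq_nonneg δ]
  have hd2 : -δ ^ 2 ≤ d := by
    rw [hd, le_div_iff₀ (by positivity : (0:ℝ) < 2 * k)]
    nlinarith [sq_nonneg δ]
  -- F bounds
  have hF := hNdef δ hδ0
  rw [← hN, ← hk] at hF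
  set F : ℝ := 2 * (2 * (δ ^ 2 + k ^ 2) - d + δ * Real.sin (2 * k) ^ 2) with hFdef
  have hFeq : (N⁻¹) ^ 2 = F := hF
  clear_value d F
  have hk1sq : π ^ 2 / 16 ≤ k ^ 2 := by nlinarith
  have hk1sq' : k ^ 2 ≤ (π / 4 + δ) ^ 2 := by nlinarith
  have hδs : δ * Real.sin (2 * k) ^ 2 ≤ δ := by nlinarith [sq_nonneg (Real.sin (2 * k))]
  have hδs0 : 0 ≤ δ * Real.sin (2 * k) ^ 2 := by positivity
  have hFlow : π ^ 2 / 4 ≤ F := by rw [hFdef]; nlinarith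
  have hFup : F ≤ π ^ 2 / 4 + 19 * δ := by rw [hFdef]; nlinarith
  -- N^2 * F = 1
  have hN2F : N ^ 2 * F = 1 := by
    rw [← hFeq, inv_pow]
    field_simp
  -- N * π ≤ 2
  have hNπ : N * π ≤ 2 := by
    nlinarith [mul_le_mul_of_nonneg_left hFlow (sq_nonneg N), sq_nonneg (N * π - 2),
      mul_pos hNp hπ]
  have hNπ0 : 0 < N * π := mul_pos hNp hπ
  have hNsq : N ^ 2 ≤ 4 / 9 := by nlinarith
  -- key inequality
  have hkey : 1 ≤ N ^ 2 * π ^ 2 / 4 + 9 * δ := by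
    have h4 : N ^ 2 * F ≤ N ^ 2 * (π ^ 2 / 4 + 19 * δ) :=
      mul_le_mul_of_nonneg_left hFup (sq_nonneg N)
    nlinarith [mul_le_mul_of_nonneg_right hNsq (by linarith : (0:ℝ) ≤ 19 * δ)]
  clear heq hJ hsinsub hs1 hs0 hs41 hs42 hssq hcos hkc hd1 hd2 hF hFeq hN2F
  clear hδs hδs0 hk1sq hk1sq' hkd hkd0 h2k hFlow hFup
  have hmain : 2 - π * N ≤ 1000 * δ * π := by
    have h5 : 2 - N * π ≤ 18 * δ := by
      nlinarith [hkey, hNπ, hNπ0.le, mul_nonneg (sub_nonneg.2 hNπ) hNπ0.le]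
    have h6 : 1000 * δ * 3.14 ≤ 1000 * δ * π :=
      mul_le_mul_of_nonneg_left hπ3.le (by linarith)
    linarith
  have habs : |N - 2 / π| = 2 / π - N := by
    rw [abs_of_nonpos (by rw [sub_nonpos, le_div_iff₀ hπ]; linarith)]
    ring
  rw [habs]
  rw [sub_le_iff_le_add, div_le_iff₀ hπ]
  linarith [hmain]
end
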